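/- Consider the three-item all-pay auction with common item values v_1 ≥ v_2 ≥ v_3 > 0 and budgets satisfying B_i ≥ max{(v_1 + v_2 + v_3)/2, v_1} for both i ∈ {1,2}, and suppose (v_1 + v_2 + v_3)/2 > v_1. Let z = (v_1 + v_2 + v_3)/2 and define the points A = (v_1, 0, z − v_1), B = (z − v_2, v_2, 0), C = (0, z − v_3, v_3) in ℝ³. Let D = (z − v_3)/(z − v_2) + 1 + (z − v_3)/(z − v_1), and set P_AB = ((z − v_3)/(z − v_2))/D, P_BC = 1/D, P_CA = ((z − v_3)/(z − v_1))/D. Then the strategy profile in which each player i ∈ {1,2} plays the mixture that, with probability P_AB, is uniform on the segment AB; with probability P_BC, is uniform on the segment BC; and with probability P_CA, is uniform on the segment CA, is a Nash equilibrium. -/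

import Mathlib

open MeasureTheory Set

noncomputable section

/-- Probability that player `i` wins an item of common value `vj` when bidding `xi`
while the opponent bids `xo`: the strictly higher bid wins; on a tie at
`min {B₁, B₂, vj}` the player with the strictly larger `min {Bᵢ, vj}` wins, and all
other ties are fair coins. -/
def winProb3 (B : Fin 2 → ℝ) (vj : ℝ) (i : Fin 2) (xi xo : ℝ) : ℝ :=
  if xo < xi then 1
  else if xi < xo then 0
  else if xi = min (min (B 0) (B 1)) vj ∧ min (B (1 - i)) vj < min (B i) vj then 1
  else if xi = min (min (B 0) (B 1)) vj ∧ min (B i) vj < min (B (1 - i)) vj then 0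
  else 1 / 2

/-- Expected total utility of player `i` from the pure bid vectors `p` (own) and
`q` (opponent) in the three-item auction with common values `v`. -/
def payoff3 (B : Fin 2 → ℝ) (v : Fin 3 → ℝ) (i : Fin 2) (p q : ℝ × ℝ × ℝ) : ℝ :=
  (winProb3 B (v 0) i p.1 q.1 * v 0 - p.1) +
    (winProb3 B (v 1) i p.2.1 q.2.1 * v 1 - p.2.1) +
    (winProb3 B (v 2) i p.2.2 q.2.2 * v 2 - p.2.2)

/-- Feasible bid vectors of a player with budget `Bi` in the three-item auction. -/
def Feas3 (Bi : ℝ) : Set (ℝ × ℝ × ℝ) :=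
  {p | 0 ≤ p.1 ∧ 0 ≤ p.2.1 ∧ 0 ≤ p.2.2 ∧ p.1 + p.2.1 + p.2.2 ≤ Bi}

/-- A mixed strategy with budget `Bi`: a probability measure on the feasible set. -/
def IsStrategy3 (Bi : ℝ) (μ : Measure (ℝ × ℝ × ℝ)) : Prop :=
  IsProbabilityMeasure μ ∧ μ (Feas3 Bi) = 1

/-- Expected utility of player `i` when he plays `μ` and the opponent plays `ν`. -/
def expUtil3 (B : Fin 2 → ℝ) (v : Fin 3 → ℝ) (i : Fin 2)
    (μ ν : Measure (ℝ × ℝ × ℝ)) : ℝ :=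
  ∫ p, (∫ q, payoff3 B v i p q ∂ν) ∂μ

/-- `(F 0, F 1)` is a (mixed) Nash equilibrium of the three-item all-pay auction
with symmetric values. -/
def IsNash3 (B : Fin 2 → ℝ) (v : Fin 3 → ℝ) (F : Fin 2 → Measure (ℝ × ℝ × ℝ)) :
    Prop :=
  (∀ i, IsStrategy3 (B i) (F i)) ∧
  ∀ i, ∀ μ, IsStrategy3 (B i) μ →
    expUtil3 B v i μ (F (1 - i)) ≤ expUtil3 B v i (F i) (F (1 - i))

/-- The uniform distribution on the segment from `a` to `b` in `ℝ³`: the pushforward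
of the uniform distribution on `[0, 1]` under the affine parameterization. -/
def unifSeg3 (a b : ℝ × ℝ × ℝ) : Measure (ℝ × ℝ × ℝ) :=
  Measure.map (fun t : ℝ =>
      ((1 - t) * a.1 + t * b.1,
        (1 - t) * a.2.1 + t * b.2.1,
        (1 - t) * a.2.2 + t * b.2.2))
    (volume.restrict (Icc (0 : ℝ) 1))

/-!
Against the mixture, the opponent's bid on each item `j` is uniformly distributed on
`[0, v j]`: the three segments project onto that coordinate as `[0, v j]`, `[0, s]` and
`[s, v j]` for some `0 < s < v j`, and the weights of the last two are proportional to their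
lengths. Ties have probability zero, so a bid `x ≥ 0` on item `j` wins with probability
`min (x / v j) 1` and earns `min x (v j) - x ≤ 0` in expectation. Hence no strategy earns
more than `0`, while the mixture itself lives in the box `∏ j, [0, v j]`, where every bid
vector earns exactly `0`.
-/

def uniformCdf (a b x : ℝ) : ℝ := max (min 1 ((x - a) / (b - a))) 0

section UniformCdf

variable {a b c x : ℝ}

lemma uniformCdf_of_le (hab : a < b) (hx : x ≤ a) : uniformCdf a b x = 0 :=
  max_eq_right (min_le_of_right_le (div_nonpos_of_nonpos_of_nonneg (by linarith) (by linarith)))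

lemma uniformCdf_of_mem (hab : a < b) (hx : x ∈ Icc a b) :
    uniformCdf a b x = (x - a) / (b - a) := by
  have hba : 0 < b - a := sub_pos.2 hab
  rw [uniformCdf, min_eq_right ((div_le_one hba).2 (by linarith [hx.2])),
    max_eq_left (div_nonneg (by linarith [hx.1]) hba.le)]

lemma uniformCdf_of_ge (hab : a < b) (hx : b ≤ x) : uniformCdf a b x = 1 := by
  rw [uniformCdf, min_eq_left ((one_le_div (sub_pos.2 hab)).2 (by linarith)),
    max_eq_left zero_le_one]

lemma uniformCdf_split (hab : a < b) (hbc : b < c) {W₁ W₂ : ℝ}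
    (hW : W₁ * (c - b) = W₂ * (b - a)) :
    W₁ * uniformCdf a b x + W₂ * uniformCdf b c x = (W₁ + W₂) * uniformCdf a c x := by
  have hac : a < c := hab.trans hbc
  rcases le_total x a with hxa | hax
  · rw [uniformCdf_of_le hab hxa, uniformCdf_of_le hbc (hxa.trans hab.le),
      uniformCdf_of_le hac hxa]
    ring
  rcases le_total x b with hxb | hbx
  · rw [uniformCdf_of_mem hab ⟨hax, hxb⟩, uniformCdf_of_le hbc hxb,
      uniformCdf_of_mem hac ⟨hax, hxb.trans hbc.le⟩]
    field_simp [(sub_pos.2 hab).ne', (sub_pos.2 hac).ne']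
    linear_combination (x - a) * hW
  rcases le_total x c with hxc | hcx
  · rw [uniformCdf_of_ge hab hbx, uniformCdf_of_mem hbc ⟨hbx, hxc⟩,
      uniformCdf_of_mem hac ⟨hax, hxc⟩]
    field_simp [(sub_pos.2 hbc).ne', (sub_pos.2 hac).ne']
    linear_combination (c - x) * hW
  · rw [uniformCdf_of_ge hab (hbc.le.trans hcx), uniformCdf_of_ge hbc hcx,
      uniformCdf_of_ge hac hcx]
    ring

lemma uniformCdf_zero_mul_le (hb : 0 < b) (hx : 0 ≤ x) : uniformCdf 0 b x * b ≤ x := by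
  rcases le_total x b with hxb | hbx
  · rw [uniformCdf_of_mem hb ⟨hx, hxb⟩, sub_zero, sub_zero, div_mul_cancel₀ _ hb.ne']
  · rw [uniformCdf_of_ge hb hbx, one_mul]
    exact hbx

lemma uniformCdf_zero_mul_of_mem (hb : 0 < b) (hx : x ∈ Icc 0 b) :
    uniformCdf 0 b x * b = x := by
  rw [uniformCdf_of_mem hb hx, sub_zero, sub_zero, div_mul_cancel₀ _ hb.ne']

end UniformCdf

def segCdf (α β x : ℝ) : ℝ := uniformCdf (min α β) (max α β) x

lemma segCdf_cycle {s w P₁ P₂ P₃ x : ℝ} (hs : 0 < s) (hsw : s < w) (hP : P₁ + P₂ + P₃ = 1)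
    (hratio : P₂ * (w - s) = P₁ * s) :
    P₁ * segCdf w s x + P₂ * segCdf s 0 x + P₃ * segCdf 0 w x = uniformCdf 0 w x := by
  simp only [segCdf, min_eq_right hsw.le, max_eq_left hsw.le, min_eq_right hs.le,
    max_eq_left hs.le, min_eq_left (hs.trans hsw).le, max_eq_right (hs.trans hsw).le]
  have hsplit := uniformCdf_split (x := x) hs hsw (W₁ := P₂) (W₂ := P₁)
    (by linear_combination hratio)
  linear_combination hsplit + uniformCdf 0 w x * hP

section WinProb

variable {B : Fin 2 → ℝ} {vj : ℝ} {i : Fin 2} {x xo : ℝ}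

lemma winProb3_of_lt (h : xo < x) : winProb3 B vj i x xo = 1 := if_pos h

lemma winProb3_of_gt (h : x < xo) : winProb3 B vj i x xo = 0 := by
  rw [winProb3, if_neg h.not_gt, if_pos h]

lemma winProb3_mem_Icc : winProb3 B vj i x xo ∈ Icc (0 : ℝ) 1 := by
  unfold winProb3
  split_ifs <;> norm_num

lemma measurable_winProb3 : Measurable (winProb3 B vj i x) :=
  Measurable.ite (measurableSet_lt measurable_id measurable_const) measurable_const
    (Measurable.ite (measurableSet_lt measurable_const measurable_id) measurable_const
      measurable_const)

lemma integrable_winProb3_comp {α : Type*} [MeasurableSpace α] {μ : Measure α}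
    [IsFiniteMeasure μ] {f : α → ℝ} (hf : Measurable f) :
    Integrable (fun q => winProb3 B vj i x (f q)) μ :=
  Integrable.of_bound (measurable_winProb3.comp hf).aestronglyMeasurable 1 <|
    ae_of_all _ fun _ => (Real.norm_of_nonneg winProb3_mem_Icc.1).trans_le winProb3_mem_Icc.2

lemma setIntegral_winProb3_affine_of_lt {α β : ℝ} (hαβ : α < β) :
    ∫ t in Icc (0 : ℝ) 1, winProb3 B vj i x ((1 - t) * α + t * β) = uniformCdf α β x := by
  have hβα : 0 < β - α := sub_pos.2 hαβ
  set c := (x - α) / (β - α)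
  have hae : (fun t => winProb3 B vj i x ((1 - t) * α + t * β))
      =ᵐ[volume.restrict (Icc 0 1)] (Iio c).indicator 1 := by
    refine ae_restrict_of_ae ((Measure.ae_ne volume c).mono fun t htc => ?_)
    rcases htc.lt_or_gt with htc | htc
    · have := (lt_div_iff₀ hβα).1 htc
      rw [indicator_of_mem (mem_Iio.2 htc), Pi.one_apply]
      exact winProb3_of_lt (by linarith)
    · have := (div_lt_iff₀ hβα).1 htc
      rw [indicator_of_notMem (notMem_Iio.2 htc.le)]
      exact winProb3_of_gt (by linarith)
  rw [integral_congr_ae hae, integral_indicator_one measurableSet_Iio,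
    ← Measure.restrict_congr_set Ico_ae_eq_Icc, measureReal_restrict_apply measurableSet_Iio,
    inter_comm, Ico_inter_Iio, Real.volume_real_Ico, sub_zero]
  rfl

lemma setIntegral_Icc_zero_one_comp_one_sub (f : ℝ → ℝ) :
    ∫ t in Icc (0 : ℝ) 1, f (1 - t) = ∫ t in Icc (0 : ℝ) 1, f t := by
  simp only [integral_Icc_eq_integral_Ioc, ← intervalIntegral.integral_of_le zero_le_one,
    intervalIntegral.integral_comp_sub_left, sub_self, sub_zero]

lemma setIntegral_winProb3_affine {α β : ℝ} (hαβ : α ≠ β) :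
    ∫ t in Icc (0 : ℝ) 1, winProb3 B vj i x ((1 - t) * α + t * β) = segCdf α β x := by
  rcases hαβ.lt_or_gt with h | h
  · rw [segCdf, min_eq_left h.le, max_eq_right h.le, setIntegral_winProb3_affine_of_lt h]
  · rw [segCdf, min_eq_right h.le, max_eq_left h.le,
      ← setIntegral_winProb3_affine_of_lt (B := B) (vj := vj) (i := i) h,
      ← setIntegral_Icc_zero_one_comp_one_sub]
    congr with t
    ring_nf

end WinProb

def bid (j : Fin 3) (p : ℝ × ℝ × ℝ) : ℝ := ![p.1, p.2.1, p.2.2] j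

lemma measurable_bid (j : Fin 3) : Measurable (bid j) := by
  fin_cases j
  exacts [measurable_fst, measurable_snd.fst, measurable_snd.snd]

lemma payoff3_eq_sum (B : Fin 2 → ℝ) (v : Fin 3 → ℝ) (i : Fin 2) (p q : ℝ × ℝ × ℝ) :
    payoff3 B v i p q = ∑ j, (winProb3 B (v j) i (bid j p) (bid j q) * v j - bid j p) := by
  rw [Fin.sum_univ_three]
  rfl

lemma integral_payoff3 (ν : Measure (ℝ × ℝ × ℝ)) [IsProbabilityMeasure ν] (B : Fin 2 → ℝ)
    (v : Fin 3 → ℝ) (i : Fin 2) (p : ℝ × ℝ × ℝ) :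
    ∫ q, payoff3 B v i p q ∂ν =
      ∑ j, ((∫ q, winProb3 B (v j) i (bid j p) (bid j q) ∂ν) * v j - bid j p) := by
  have hint (j : Fin 3) : Integrable (fun q => winProb3 B (v j) i (bid j p) (bid j q)) ν :=
    integrable_winProb3_comp (measurable_bid j)
  simp_rw [payoff3_eq_sum]
  rw [integral_finsetSum _ fun j _ => ?_]
  · refine Finset.sum_congr rfl fun j _ => ?_
    rw [integral_sub ((hint j).mul_const _) (integrable_const _), integral_mul_const,
      integral_const, probReal_univ, one_smul]
  · exact ((hint j).mul_const (v j)).sub (integrable_const (bid j p))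

section Segment

variable {a b : ℝ × ℝ × ℝ}

instance (a b : ℝ × ℝ × ℝ) : IsProbabilityMeasure (unifSeg3 a b) :=
  have : IsProbabilityMeasure (volume.restrict (Icc (0 : ℝ) 1)) := ⟨by simp⟩
  Measure.isProbabilityMeasure_map (by fun_prop)

lemma integral_winProb3_unifSeg3 {B : Fin 2 → ℝ} {vj : ℝ} {i : Fin 2} {x : ℝ} {j : Fin 3}
    (h : bid j a ≠ bid j b) :
    ∫ q, winProb3 B vj i x (bid j q) ∂unifSeg3 a b = segCdf (bid j a) (bid j b) x := by
  have hbid (t : ℝ) : bid j ((1 - t) * a.1 + t * b.1, (1 - t) * a.2.1 + t * b.2.1,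
      (1 - t) * a.2.2 + t * b.2.2) = (1 - t) * bid j a + t * bid j b := by
    fin_cases j <;> rfl
  rw [unifSeg3, integral_map (f := fun q => winProb3 B vj i x (bid j q)) (by fun_prop)
    (measurable_winProb3.comp (measurable_bid j)).aestronglyMeasurable]
  simp only [hbid]
  exact setIntegral_winProb3_affine h

lemma unifSeg3_apply_of_convex {S : Set (ℝ × ℝ × ℝ)} (hS : Convex ℝ S) (hSm : MeasurableSet S)
    (ha : a ∈ S) (hb : b ∈ S) : unifSeg3 a b S = 1 := by
  rw [unifSeg3, Measure.map_apply (by fun_prop) hSm,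
    Measure.restrict_apply (hSm.preimage (by fun_prop)), inter_eq_self_of_subset_right,
    Real.volume_Icc, sub_zero, ENNReal.ofReal_one]
  intro t ht
  rw [mem_preimage]
  convert hS ha hb (sub_nonneg.2 ht.2) ht.1 (sub_add_cancel 1 t) using 1
  ext <;> simp

end Segment

section Mixture

variable {α : Type*} [MeasurableSpace α] {μ₁ μ₂ μ₃ : Measure α} {P₁ P₂ P₃ : ℝ}

lemma integral_mixture3 (h₁ : 0 ≤ P₁) (h₂ : 0 ≤ P₂) (h₃ : 0 ≤ P₃) {f : α → ℝ}
    (hf₁ : Integrable f μ₁) (hf₂ : Integrable f μ₂) (hf₃ : Integrable f μ₃) :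
    ∫ a, f a ∂(ENNReal.ofReal P₁ • μ₁ + ENNReal.ofReal P₂ • μ₂ + ENNReal.ofReal P₃ • μ₃) =
      P₁ * ∫ a, f a ∂μ₁ + P₂ * ∫ a, f a ∂μ₂ + P₃ * ∫ a, f a ∂μ₃ := by
  have hsm {μ : Measure α} (hf : Integrable f μ) {P : ℝ} :=
    hf.smul_measure (ENNReal.ofReal_ne_top (r := P))
  rw [integral_add_measure ((hsm hf₁).add_measure (hsm hf₂)) (hsm hf₃),
    integral_add_measure (hsm hf₁) (hsm hf₂), integral_smul_measure, integral_smul_measure,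
    integral_smul_measure, ENNReal.toReal_ofReal h₁, ENNReal.toReal_ofReal h₂,
    ENNReal.toReal_ofReal h₃, smul_eq_mul, smul_eq_mul, smul_eq_mul]

lemma mixture3_apply_eq_one (h₁ : 0 ≤ P₁) (h₂ : 0 ≤ P₂) (h₃ : 0 ≤ P₃)
    (hP : P₁ + P₂ + P₃ = 1) {S : Set α} (hS₁ : μ₁ S = 1) (hS₂ : μ₂ S = 1) (hS₃ : μ₃ S = 1) :
    (ENNReal.ofReal P₁ • μ₁ + ENNReal.ofReal P₂ • μ₂ + ENNReal.ofReal P₃ • μ₃) S = 1 := by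
  simp only [Measure.add_apply, Measure.smul_apply, smul_eq_mul, hS₁, hS₂, hS₃, mul_one]
  rw [← ENNReal.ofReal_add h₁ h₂, ← ENNReal.ofReal_add (add_nonneg h₁ h₂) h₃, hP,
    ENNReal.ofReal_one]

end Mixture

lemma measurableSet_Feas3 (Bi : ℝ) : MeasurableSet (Feas3 Bi) := by
  unfold Feas3
  measurability

lemma convex_Feas3 (Bi : ℝ) : Convex ℝ (Feas3 Bi) := by
  rintro p ⟨hp₁, hp₂, hp₃, hp⟩ q ⟨hq₁, hq₂, hq₃, hq⟩ s t hs ht hst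
  refine ⟨?_, ?_, ?_, ?_⟩ <;> simp only [Prod.fst_add, Prod.snd_add, Prod.smul_fst,
    Prod.smul_snd, smul_eq_mul]
  · positivity
  · positivity
  · positivity
  · nlinarith

lemma IsStrategy3.ae_bid_nonneg {Bi : ℝ} {μ : Measure (ℝ × ℝ × ℝ)} (hμ : IsStrategy3 Bi μ) :
    ∀ᵐ p ∂μ, ∀ j, 0 ≤ bid j p := by
  have := hμ.1
  filter_upwards [(ae_mem_iff_measure_eq (measurableSet_Feas3 Bi).nullMeasurableSet).2
    (by rw [hμ.2, measure_univ])] with p ⟨hp₁, hp₂, hp₃, _⟩ j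
  fin_cases j <;> assumption

theorem isNash3_of_integral_payoff3_eq {B : Fin 2 → ℝ} {v : Fin 3 → ℝ}
    {ν : Measure (ℝ × ℝ × ℝ)} (hv : ∀ j, 0 < v j) (hν : ∀ i, IsStrategy3 (B i) ν)
    (hle : ∀ᵐ q ∂ν, ∀ j, bid j q ≤ v j)
    (hpay : ∀ i p, ∫ q, payoff3 B v i p q ∂ν =
      ∑ j, (uniformCdf 0 (v j) (bid j p) * v j - bid j p)) :
    IsNash3 B v (fun _ => ν) := by
  refine ⟨hν, fun i μ hμ => ?_⟩
  simp only [expUtil3, hpay]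
  calc ∫ p, ∑ j, (uniformCdf 0 (v j) (bid j p) * v j - bid j p) ∂μ ≤ 0 := by
        refine integral_nonpos_of_ae (hμ.ae_bid_nonneg.mono fun p hp => ?_)
        exact Finset.sum_nonpos fun j _ => sub_nonpos.2 (uniformCdf_zero_mul_le (hv j) (hp j))
    _ = ∫ p, ∑ j, (uniformCdf 0 (v j) (bid j p) * v j - bid j p) ∂ν := by
        refine (integral_eq_zero_of_ae ?_).symm
        filter_upwards [(hν i).ae_bid_nonneg, hle] with p hp₀ hp₁
        exact Finset.sum_eq_zero fun j _ =>
          sub_eq_zero.2 (uniformCdf_zero_mul_of_mem (hv j) ⟨hp₀ j, hp₁ j⟩)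

lemma normalized_inv_weights {a b c D PAB PBC PCA : ℝ} (ha : 0 < a) (hb : 0 < b) (hc : 0 < c)
    (hD : D = c / b + 1 + c / a) (hPAB : PAB = c / b / D) (hPBC : PBC = 1 / D)
    (hPCA : PCA = c / a / D) :
    0 ≤ PAB ∧ 0 ≤ PBC ∧ 0 ≤ PCA ∧ PAB + PBC + PCA = 1 ∧ PAB * b = PBC * c ∧
      PBC * c = PCA * a := by
  subst hD hPAB hPBC hPCA
  refine ⟨by positivity, by positivity, by positivity, ?_, ?_, ?_⟩ <;> field_simp

section Triangle

variable {v : Fin 3 → ℝ} {z PAB PBC PCA : ℝ}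

def triangleMixture (v : Fin 3 → ℝ) (z PAB PBC PCA : ℝ) : Measure (ℝ × ℝ × ℝ) :=
  ENNReal.ofReal PAB • unifSeg3 (v 0, 0, z - v 0) (z - v 1, v 1, 0) +
    ENNReal.ofReal PBC • unifSeg3 (z - v 1, v 1, 0) (0, z - v 2, v 2) +
    ENNReal.ofReal PCA • unifSeg3 (0, z - v 2, v 2) (v 0, 0, z - v 0)

lemma triangleMixture_apply_of_convex (hPAB : 0 ≤ PAB) (hPBC : 0 ≤ PBC) (hPCA : 0 ≤ PCA)
    (hP : PAB + PBC + PCA = 1) {S : Set (ℝ × ℝ × ℝ)} (hS : Convex ℝ S) (hSm : MeasurableSet S)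
    (hA : (v 0, 0, z - v 0) ∈ S) (hB : (z - v 1, v 1, 0) ∈ S) (hC : (0, z - v 2, v 2) ∈ S) :
    triangleMixture v z PAB PBC PCA S = 1 :=
  mixture3_apply_eq_one hPAB hPBC hPCA hP (unifSeg3_apply_of_convex hS hSm hA hB)
    (unifSeg3_apply_of_convex hS hSm hB hC) (unifSeg3_apply_of_convex hS hSm hC hA)

lemma isProbabilityMeasure_triangleMixture (hPAB : 0 ≤ PAB) (hPBC : 0 ≤ PBC) (hPCA : 0 ≤ PCA)
    (hP : PAB + PBC + PCA = 1) : IsProbabilityMeasure (triangleMixture v z PAB PBC PCA) :=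
  ⟨triangleMixture_apply_of_convex hPAB hPBC hPCA hP convex_univ MeasurableSet.univ
    trivial trivial trivial⟩

lemma isStrategy3_triangleMixture {Bi : ℝ} (hz : v 0 + v 1 + v 2 = 2 * z)
    (hvz : ∀ j, v j < z) (hzB : z ≤ Bi) (hPAB : 0 ≤ PAB) (hPBC : 0 ≤ PBC) (hPCA : 0 ≤ PCA)
    (hP : PAB + PBC + PCA = 1) : IsStrategy3 Bi (triangleMixture v z PAB PBC PCA) := by
  have := hvz 0; have := hvz 1; have := hvz 2
  refine ⟨isProbabilityMeasure_triangleMixture hPAB hPBC hPCA hP,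
    triangleMixture_apply_of_convex hPAB hPBC hPCA hP (convex_Feas3 Bi) (measurableSet_Feas3 Bi)
      ?_ ?_ ?_⟩ <;>
    refine ⟨?_, ?_, ?_, ?_⟩ <;> dsimp only <;> linarith

lemma ae_bid_le_triangleMixture (hz : v 0 + v 1 + v 2 = 2 * z) (hvz : ∀ j, v j < z)
    (hPAB : 0 ≤ PAB) (hPBC : 0 ≤ PBC) (hPCA : 0 ≤ PCA) (hP : PAB + PBC + PCA = 1) :
    ∀ᵐ q ∂triangleMixture v z PAB PBC PCA, ∀ j, bid j q ≤ v j := by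
  have := hvz 0; have := hvz 1; have := hvz 2
  have := isProbabilityMeasure_triangleMixture (v := v) (z := z) hPAB hPBC hPCA hP
  have hbox : triangleMixture v z PAB PBC PCA (Icc 0 (v 0, v 1, v 2)) = 1 := by
    refine triangleMixture_apply_of_convex hPAB hPBC hPCA hP (convex_Icc _ _) measurableSet_Icc
      ?_ ?_ ?_ <;>
      refine ⟨⟨?_, ?_, ?_⟩, ?_, ?_, ?_⟩ <;> dsimp only [Prod.fst_zero, Prod.snd_zero] <;> linarith
  filter_upwards [(ae_mem_iff_measure_eq measurableSet_Icc.nullMeasurableSet).2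
    (by rw [hbox, measure_univ])] with q ⟨_, hq₁, hq₂, hq₃⟩ j
  fin_cases j <;> assumption

lemma integral_winProb3_triangleMixture (hz : v 0 + v 1 + v 2 = 2 * z) (hvz : ∀ j, v j < z)
    (hPAB : 0 ≤ PAB) (hPBC : 0 ≤ PBC) (hPCA : 0 ≤ PCA) (hP : PAB + PBC + PCA = 1)
    (hAB_BC : PAB * (z - v 1) = PBC * (z - v 2)) (hBC_CA : PBC * (z - v 2) = PCA * (z - v 0))
    {B : Fin 2 → ℝ} {vj : ℝ} {i : Fin 2} {x : ℝ} (j : Fin 3) :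
    ∫ q, winProb3 B vj i x (bid j q) ∂triangleMixture v z PAB PBC PCA =
      uniformCdf 0 (v j) x := by
  have := hvz 0; have := hvz 1; have := hvz 2
  have hseg {p q : ℝ × ℝ × ℝ} (h : ∀ j, bid j p ≠ bid j q) :=
    integral_winProb3_unifSeg3 (B := B) (vj := vj) (i := i) (x := x) (h j)
  have hint {μ : Measure (ℝ × ℝ × ℝ)} [IsProbabilityMeasure μ] :
      Integrable (fun q => winProb3 B vj i x (bid j q)) μ :=
    integrable_winProb3_comp (measurable_bid j)
  rw [triangleMixture, integral_mixture3 hPAB hPBC hPCA hint hint hint, hseg, hseg, hseg]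
  all_goals
    fin_cases j <;> simp only [bid, Fin.zero_eta, Fin.mk_one, Fin.reduceFinMk, Matrix.cons_val]
  · exact segCdf_cycle (by linarith) (by linarith) hP (by linear_combination -hAB_BC + PBC * hz)
  · linear_combination segCdf_cycle (x := x) (s := z - v 2) (w := v 1) (P₁ := PBC)
      (P₂ := PCA) (P₃ := PAB) (by linarith) (by linarith) (by linear_combination hP)
      (by linear_combination -hBC_CA + PCA * hz)
  · linear_combination segCdf_cycle (x := x) (s := z - v 0) (w := v 2) (P₁ := PCA)
      (P₂ := PAB) (P₃ := PBC) (by linarith) (by linarith) (by linear_combination hP)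
      (by linear_combination hAB_BC + hBC_CA + PAB * hz)
  all_goals
    intro j
    fin_cases j <;> simp only [Fin.zero_eta, Fin.mk_one, Fin.reduceFinMk, Matrix.cons_val] <;>
      intro <;> linarith

theorem isNash3_triangleMixture {B : Fin 2 → ℝ} (hz : v 0 + v 1 + v 2 = 2 * z)
    (hvz : ∀ j, v j < z) (hzB : ∀ i, z ≤ B i) (hPAB : 0 ≤ PAB) (hPBC : 0 ≤ PBC)
    (hPCA : 0 ≤ PCA) (hP : PAB + PBC + PCA = 1) (hAB_BC : PAB * (z - v 1) = PBC * (z - v 2))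
    (hBC_CA : PBC * (z - v 2) = PCA * (z - v 0)) :
    IsNash3 B v (fun _ => triangleMixture v z PAB PBC PCA) := by
  have := isProbabilityMeasure_triangleMixture (v := v) (z := z) hPAB hPBC hPCA hP
  refine isNash3_of_integral_payoff3_eq (fun j => ?_)
    (fun i => isStrategy3_triangleMixture hz hvz (hzB i) hPAB hPBC hPCA hP)
    (ae_bid_le_triangleMixture hz hvz hPAB hPBC hPCA hP) fun i p => ?_
  · fin_cases j <;> simp only [Fin.zero_eta, Fin.mk_one, Fin.reduceFinMk] <;>
      linarith [hvz 0, hvz 1, hvz 2]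
  · simp only [integral_payoff3,
      integral_winProb3_triangleMixture hz hvz hPAB hPBC hPCA hP hAB_BC hBC_CA]

end Triangle

theorem nash_three_items_case1_general (B : Fin 2 → ℝ) (v : Fin 3 → ℝ)
    (hv23 : v 2 ≤ v 1) (hv12 : v 1 ≤ v 0)
    (hB : ∀ i, max ((v 0 + v 1 + v 2) / 2) (v 0) ≤ B i)
    (hz : v 0 < (v 0 + v 1 + v 2) / 2)
    (z : ℝ) (hzdef : z = (v 0 + v 1 + v 2) / 2)
    (A Bp C : ℝ × ℝ × ℝ)
    (hA : A = (v 0, 0, z - v 0)) (hBp : Bp = (z - v 1, v 1, 0))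
    (hC : C = (0, z - v 2, v 2))
    (D PAB PBC PCA : ℝ)
    (hD : D = (z - v 2) / (z - v 1) + 1 + (z - v 2) / (z - v 0))
    (hPAB : PAB = (z - v 2) / (z - v 1) / D)
    (hPBC : PBC = 1 / D)
    (hPCA : PCA = (z - v 2) / (z - v 0) / D) :
    IsNash3 B v (fun _ =>
      ENNReal.ofReal PAB • unifSeg3 A Bp +
        ENNReal.ofReal PBC • unifSeg3 Bp C +
        ENNReal.ofReal PCA • unifSeg3 C A) := by
  have hvz : ∀ j, v j < z := by
    intro j
    fin_cases j <;> simp only [Fin.zero_eta, Fin.mk_one, Fin.reduceFinMk] <;> linarith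
  obtain ⟨hPAB₀, hPBC₀, hPCA₀, hP, hAB_BC, hBC_CA⟩ :=
    normalized_inv_weights (sub_pos.2 (hvz 0)) (sub_pos.2 (hvz 1)) (sub_pos.2 (hvz 2)) hD hPAB
      hPBC hPCA
  subst hA hBp hC
  exact isNash3_triangleMixture (by rw [hzdef]; ring)
    hvz (fun i => hzdef ▸ (le_max_left _ _).trans (hB i)) hPAB₀ hPBC₀ hPCA₀ hP hAB_BC hBC_CA

/-- Three items with common values `v₁ ≥ v₂ ≥ v₃ > 0` and large budgets
(`Bᵢ ≥ max {(v₁+v₂+v₃)/2, v₁}`), in the case `(v₁+v₂+v₃)/2 > v₁`: with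
`z = (v₁+v₂+v₃)/2`, `A = (v₁, 0, z - v₁)`, `B = (z - v₂, v₂, 0)`,
`C = (0, z - v₃, v₃)` and the probabilities `P_AB, P_BC, P_CA` below, both players
playing the mixture of uniform distributions on the segments `AB`, `BC`, `CA` with
these weights is a Nash equilibrium. -/
theorem nash_three_items_case1 (B : Fin 2 → ℝ) (v : Fin 3 → ℝ)
    (hv3 : 0 < v 2) (hv23 : v 2 ≤ v 1) (hv12 : v 1 ≤ v 0)
    (hB : ∀ i, max ((v 0 + v 1 + v 2) / 2) (v 0) ≤ B i)
    (hz : v 0 < (v 0 + v 1 + v 2) / 2)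
    (z : ℝ) (hzdef : z = (v 0 + v 1 + v 2) / 2)
    (A Bp C : ℝ × ℝ × ℝ)
    (hA : A = (v 0, 0, z - v 0)) (hBp : Bp = (z - v 1, v 1, 0))
    (hC : C = (0, z - v 2, v 2))
    (D PAB PBC PCA : ℝ)
    (hD : D = (z - v 2) / (z - v 1) + 1 + (z - v 2) / (z - v 0))
    (hPAB : PAB = (z - v 2) / (z - v 1) / D)
    (hPBC : PBC = 1 / D)
    (hPCA : PCA = (z - v 2) / (z - v 0) / D) :
    IsNash3 B v (fun _ =>
      ENNReal.ofReal PAB • unifSeg3 A Bp +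
        ENNReal.ofReal PBC • unifSeg3 Bp C +
        ENNReal.ofReal PCA • unifSeg3 C A) :=
  nash_three_items_case1_general B v hv23 hv12 hB hz z hzdef A Bp C hA hBp hC D PAB PBC PCA hD hPAB
    hPBC hPCA
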